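/- arXiv:2006.09907 — 3 statements merged into one kernel-verified Lean document; each statement's English description precedes it below -/
import Mathlib

section
/- Consider the graded ring R = ℂ[u,e]/⟨e·u^{m-k}, u^m, (-d·u + (k-1)·e)·e⟩ with u, e in degree 1, where m > k ≥ 2 and d ≥ k-1 are integers. Then the monomials {1, u, ..., u^{m-1}, e, e·u, ..., e·u^{m-k-1}} form a ℂ-vector-space basis of R. -/
open MvPolynomial

/-- The ideal `⟨e·u^(m-k), u^m, (-d·u + (k-1)·e)·e⟩` in `ℂ[u,e]`, with `u = X 0`, `e = X 1`. -/
noncomputable def SRIdeal (m k d : ℕ) : Ideal (MvPolynomial (Fin 2) ℂ) :=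
  Ideal.span {X 1 * X 0 ^ (m - k), X 0 ^ m,
    (C (-(d : ℂ)) * X 0 + C ((k : ℂ) - 1) * X 1) * X 1}

/-!
Since `k - 1` is invertible, the third relation says `e² = c·u·e` with `c = d/(k-1)`, so every
monomial `u^a e^(b+1)` reduces to `c^b·e·u^(a+b)`; together with `u^m = 0` and `e·u^(m-k) = 0`
this shows that the listed monomials span. For independence, the reduction itself defines a linear
map `ℂ[u,e] → ℂ^(m + (m-k))` (coordinates of the normal form of each monomial), and this map
vanishes on the ideal because it does so on every monomial multiple of each generator.
-/

namespace SRPresentation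

variable {R : Type*} [CommRing R] (m n : ℕ) (c : R)

noncomputable def ideal : Ideal (MvPolynomial (Fin 2) R) :=
  Ideal.span {X 1 * X 0 ^ n, X 0 ^ m, (X 1 - C c * X 0) * X 1}

def monomialCoords : ℕ → ℕ → Fin m ⊕ Fin n → R
  | a, 0 => if h : a < m then Pi.single (.inl ⟨a, h⟩) 1 else 0
  | a, b + 1 => if h : a + b < n then Pi.single (.inr ⟨a + b, h⟩) (c ^ b) else 0

noncomputable def coords : MvPolynomial (Fin 2) R →ₗ[R] Fin m ⊕ Fin n → R :=
  (basisMonomials (Fin 2) R).constr R fun σ => monomialCoords m n c (σ 0) (σ 1)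

variable {m n c}

lemma coords_X_pow_mul_X_pow (a b : ℕ) :
    coords m n c (X 0 ^ a * X 1 ^ b) = monomialCoords m n c a b := by
  have : (X 0 ^ a * X 1 ^ b : MvPolynomial (Fin 2) R) = basisMonomials (Fin 2) R
      (Finsupp.single 0 a + Finsupp.single 1 b) := by
    simp [X_pow_eq_monomial, monomial_mul]
  rw [this, coords, Module.Basis.constr_basis]
  simp

lemma coords_C_mul (r : R) (p : MvPolynomial (Fin 2) R) :
    coords m n c (C r * p) = r • coords m n c p := by
  rw [← smul_eq_C_mul, map_smul]

lemma coords_mul_eq_zero {g : MvPolynomial (Fin 2) R}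
    (hg : ∀ a b, coords m n c (X 0 ^ a * X 1 ^ b * g) = 0) (q : MvPolynomial (Fin 2) R) :
    coords m n c (q * g) = 0 := by
  induction q using MvPolynomial.induction_on' with
  | monomial σ r =>
    rw [monomial_eq, Finsupp.prod_fintype _ _ (by simp), Fin.prod_univ_two, mul_assoc,
      coords_C_mul, hg, smul_zero]
  | add p q hp hq => rw [add_mul, map_add, hp, hq, add_zero]

lemma coords_eq_zero_of_mem (hn : n ≤ m) {p : MvPolynomial (Fin 2) R} (hp : p ∈ ideal m n c) :
    coords m n c p = 0 := by
  suffices ∀ q, coords m n c (q * p) = 0 by simpa using this 1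
  induction hp using Submodule.span_induction with
  | mem g hg =>
    refine coords_mul_eq_zero fun a b => ?_
    rcases hg with rfl | rfl | rfl
    · rw [show (X 0 ^ a * X 1 ^ b * (X 1 * X 0 ^ n) : MvPolynomial (Fin 2) R) =
          X 0 ^ (a + n) * X 1 ^ (b + 1) by ring, coords_X_pow_mul_X_pow]
      simp [monomialCoords]; omega
    · rw [show (X 0 ^ a * X 1 ^ b * X 0 ^ m : MvPolynomial (Fin 2) R) =
          X 0 ^ (a + m) * X 1 ^ b by ring, coords_X_pow_mul_X_pow]
      cases b <;> simp [monomialCoords]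
      omega
    · rw [show (X 0 ^ a * X 1 ^ b * ((X 1 - C c * X 0) * X 1) : MvPolynomial (Fin 2) R) =
          X 0 ^ a * X 1 ^ (b + 1 + 1) - C c * (X 0 ^ (a + 1) * X 1 ^ (b + 1)) by ring,
        map_sub, coords_C_mul, coords_X_pow_mul_X_pow, coords_X_pow_mul_X_pow]
      simp only [monomialCoords, Nat.add_right_comm a 1 b, ← add_assoc]
      split_ifs
      · rw [← Pi.single_smul, smul_eq_mul, pow_succ', sub_self]
      · rw [smul_zero, sub_zero]
  | zero => simp
  | add x y _ _ hx hy => intro q; rw [mul_add, map_add, hx, hy, add_zero]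
  | smul a x _ hx => intro q; rw [smul_eq_mul, ← mul_assoc]; exact hx _

variable (m n) in
noncomputable def stdMonomial : Fin m ⊕ Fin n → MvPolynomial (Fin 2) R :=
  Sum.elim (fun i => X 0 ^ (i : ℕ)) (fun j => X 1 * X 0 ^ (j : ℕ))

lemma coords_stdMonomial (i : Fin m ⊕ Fin n) :
    coords m n c (stdMonomial m n i) = Pi.single i 1 := by
  rcases i with ⟨i, hi⟩ | ⟨j, hj⟩
  · simpa [stdMonomial, monomialCoords, hi] using
      coords_X_pow_mul_X_pow (m := m) (n := n) (c := c) i 0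
  · simpa [stdMonomial, monomialCoords, hj, mul_comm] using
      coords_X_pow_mul_X_pow (m := m) (n := n) (c := c) j 1

lemma linearIndependent_mk_stdMonomial (hn : n ≤ m) :
    LinearIndependent R (Ideal.Quotient.mk (ideal m n c) ∘ stdMonomial m n) := by
  classical
  rw [Fintype.linearIndependent_iff]
  intro g hg
  have hmem : ∑ i, g i • stdMonomial m n i ∈ ideal m n c := by
    rw [← Ideal.Quotient.eq_zero_iff_mem, ← Ideal.Quotient.mkₐ_eq_mk R, map_sum]
    simpa [map_smul] using hg
  have := coords_eq_zero_of_mem hn hmem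
  simp only [map_sum, map_smul, coords_stdMonomial, ← Pi.single_smul, smul_eq_mul, mul_one,
    Finset.univ_sum_single] at this
  exact congrFun this

lemma mk_C_mul (r : R) (p : MvPolynomial (Fin 2) R) :
    Ideal.Quotient.mk (ideal m n c) (C r * p) = r • Ideal.Quotient.mk (ideal m n c) p := by
  rw [← smul_eq_C_mul, ← Ideal.Quotient.mkₐ_eq_mk R, map_smul]

lemma mk_X_pow_mul_X_pow_succ (a b : ℕ) :
    Ideal.Quotient.mk (ideal m n c) (X 0 ^ a * X 1 ^ (b + 1)) =
      c ^ b • Ideal.Quotient.mk (ideal m n c) (X 0 ^ (a + b) * X 1) := by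
  induction b generalizing a with
  | zero => simp
  | succ b ih =>
    have hrel : X 0 ^ a * X 1 ^ (b + 1 + 1) - C c * (X 0 ^ (a + 1) * X 1 ^ (b + 1)) ∈
        ideal m n c := by
      rw [show (X 0 ^ a * X 1 ^ (b + 1 + 1) - C c * (X 0 ^ (a + 1) * X 1 ^ (b + 1)) :
          MvPolynomial (Fin 2) R) = X 0 ^ a * X 1 ^ b * ((X 1 - C c * X 0) * X 1) by ring]
      exact Ideal.mul_mem_left _ _ (Ideal.subset_span (by simp))
    rw [Ideal.Quotient.eq.mpr hrel, mk_C_mul, ih, smul_smul, pow_succ', Nat.add_right_comm,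
      add_assoc]

lemma mk_X_pow_mul_X_pow_mem_span (a b : ℕ) :
    Ideal.Quotient.mk (ideal m n c) (X 0 ^ a * X 1 ^ b) ∈
      Submodule.span R (Set.range (Ideal.Quotient.mk (ideal m n c) ∘ stdMonomial m n)) := by
  rcases b with _ | b
  · by_cases ha : a < m
    · exact Submodule.subset_span ⟨.inl ⟨a, ha⟩, by simp [stdMonomial]⟩
    · rw [Ideal.Quotient.eq_zero_iff_mem.mpr]
      · exact Submodule.zero_mem _
      rw [show a = m + (a - m) by omega, pow_add, pow_zero, mul_one]
      exact Ideal.mul_mem_right _ _ (Ideal.subset_span (by simp))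
  · rw [mk_X_pow_mul_X_pow_succ]
    refine Submodule.smul_mem _ _ ?_
    by_cases hab : a + b < n
    · exact Submodule.subset_span ⟨.inr ⟨a + b, hab⟩, by simp [stdMonomial, mul_comm]⟩
    · rw [Ideal.Quotient.eq_zero_iff_mem.mpr]
      · exact Submodule.zero_mem _
      rw [show (X 0 ^ (a + b) * X 1 : MvPolynomial (Fin 2) R) =
          X 1 * X 0 ^ n * X 0 ^ (a + b - n) by
            rw [mul_assoc, ← pow_add, Nat.add_sub_cancel' (by omega), mul_comm]]
      exact Ideal.mul_mem_right _ _ (Ideal.subset_span (by simp))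

lemma span_mk_stdMonomial :
    ⊤ ≤ Submodule.span R (Set.range (Ideal.Quotient.mk (ideal m n c) ∘ stdMonomial m n)) := by
  rintro x -
  obtain ⟨p, rfl⟩ := Ideal.Quotient.mk_surjective x
  induction p using MvPolynomial.induction_on' with
  | monomial σ r =>
    rw [monomial_eq, Finsupp.prod_fintype _ _ (by simp), Fin.prod_univ_two, mk_C_mul]
    exact Submodule.smul_mem _ _ (mk_X_pow_mul_X_pow_mem_span _ _)
  | add p q hp hq => rw [map_add]; exact Submodule.add_mem _ hp hq

variable (c) in
noncomputable def basis (hn : n ≤ m) :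
    Module.Basis (Fin m ⊕ Fin n) R (MvPolynomial (Fin 2) R ⧸ ideal m n c) :=
  .mk (linearIndependent_mk_stdMonomial hn) span_mk_stdMonomial

lemma basis_apply (hn : n ≤ m) (i : Fin m ⊕ Fin n) :
    basis c hn i = Ideal.Quotient.mk (ideal m n c) (stdMonomial m n i) :=
  Module.Basis.mk_apply _ _ _

end SRPresentation

lemma SRIdeal_eq_ideal {m k : ℕ} (d : ℕ) (hk : k ≠ 1) :
    SRIdeal m k d = SRPresentation.ideal m (m - k) ((d : ℂ) / (k - 1)) := by
  have hk1 : (k : ℂ) - 1 ≠ 0 := sub_ne_zero.mpr (by exact_mod_cast hk)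
  have hC : (C ((k : ℂ) - 1) * C ((d : ℂ) / (k - 1)) : MvPolynomial (Fin 2) ℂ) =
      C (d : ℂ) := by
    rw [← map_mul, mul_div_cancel₀ _ hk1]
  have hgen : (C (-(d : ℂ)) * X 0 + C ((k : ℂ) - 1) * X 1) * X 1 =
      (C ((k : ℂ) - 1) * ((X 1 - C ((d : ℂ) / (k - 1)) * X 0) * X 1) :
        MvPolynomial (Fin 2) ℂ) := by
    rw [map_neg]
    linear_combination (X 0 * X 1) * hC
  simp only [SRIdeal, SRPresentation.ideal, hgen, Ideal.span_insert,
    Ideal.span_singleton_mul_left_unit (hk1.isUnit.map C)]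

theorem stmt6_general (m k d : ℕ) (hk : 2 ≤ k) :
    ∃ B : Module.Basis (Fin m ⊕ Fin (m - k)) ℂ (MvPolynomial (Fin 2) ℂ ⧸ SRIdeal m k d),
      (∀ i : Fin m, B (Sum.inl i) = Ideal.Quotient.mk (SRIdeal m k d) (X 0 ^ (i : ℕ))) ∧
      (∀ i : Fin (m - k),
        B (Sum.inr i) = Ideal.Quotient.mk (SRIdeal m k d) (X 1 * X 0 ^ (i : ℕ))) := by
  rw [SRIdeal_eq_ideal d (by omega)]
  exact ⟨SRPresentation.basis _ (Nat.sub_le m k), fun i => SRPresentation.basis_apply _ _,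
    fun i => SRPresentation.basis_apply _ _⟩

/-- In `R = ℂ[u,e]/⟨e·u^(m-k), u^m, (-d·u + (k-1)·e)·e⟩`, for `m > k ≥ 2` and `d ≥ k - 1`,
the monomials `1, u, …, u^(m-1), e, e·u, …, e·u^(m-k-1)` form a `ℂ`-vector-space basis. -/
theorem stmt6 (m k d : ℕ) (hk : 2 ≤ k) (hkm : k < m) (hd : k ≤ d + 1) :
    ∃ B : Module.Basis (Fin m ⊕ Fin (m - k)) ℂ (MvPolynomial (Fin 2) ℂ ⧸ SRIdeal m k d),
      (∀ i : Fin m, B (Sum.inl i) = Ideal.Quotient.mk (SRIdeal m k d) (X 0 ^ (i : ℕ))) ∧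
      (∀ i : Fin (m - k),
        B (Sum.inr i) = Ideal.Quotient.mk (SRIdeal m k d) (X 1 * X 0 ^ (i : ℕ))) :=
  stmt6_general m k d hk
end

section
/- In the ring R = ℂ[u,e]/⟨e·u^{m-k}, u^m, (-d·u + (k-1)·e)·e⟩ with m > k ≥ 2 and d > k-1 integers, the element u^k lies in the ideal generated by the two elements (-d·u + (k-1)·e)·u^{k-1} and (u - e)^k; consequently the ideal ⟨-d·u + (k-1)·e, (u-e)^k⟩ equals the ideal ⟨-d·u + (k-1)·e, u^k⟩. -/
open MvPolynomial

set_option maxHeartbeats 1000000 in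
/-- In `R = ℂ[u,e]/⟨e·u^(m-k), u^m, (-d·u + (k-1)·e)·e⟩` with `m > k ≥ 2` and `d > k-1`,
`u^k` lies in the ideal generated by `(-d·u + (k-1)·e)·u^(k-1)` and `(u-e)^k`; consequently
`⟨-d·u + (k-1)·e, (u-e)^k⟩ = ⟨-d·u + (k-1)·e, u^k⟩` in `R`. -/
theorem stmt7 (m k d : ℕ) (hk : 2 ≤ k) (hkm : k < m) (hd : k ≤ d) :
    let q := Ideal.Quotient.mk (SRIdeal m k d)
    let f : MvPolynomial (Fin 2) ℂ := C (-(d : ℂ)) * X 0 + C ((k : ℂ) - 1) * X 1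
    q (X 0 ^ k) ∈ Ideal.span {q (f * X 0 ^ (k - 1)), q ((X 0 - X 1) ^ k)} ∧
    Ideal.span {q f, q ((X 0 - X 1) ^ k)} = Ideal.span {q f, q (X 0 ^ k)} := by
  intro q f
  set a : ℂ := (k : ℂ) - 1 with ha_def
  have ha : a ≠ 0 := by
    have : (k : ℂ) ≠ 1 := by
      intro h
      have : (k : ℕ) = 1 := by exact_mod_cast h
      omega
    simpa [ha_def, sub_eq_zero] using this
  have had : a - (d : ℂ) ≠ 0 := by
    intro h
    have h2 : (k : ℂ) = (d : ℂ) + 1 := by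
      rw [ha_def] at h
      linear_combination h
    have : (k : ℕ) = d + 1 := by exact_mod_cast h2
    omega
  -- quotient ring elements
  set U := q (X 0 : MvPolynomial (Fin 2) ℂ) with hU
  set E := q (X 1 : MvPolynomial (Fin 2) ℂ) with hE
  set F := q f with hFdef
  set c := q (C (-(d : ℂ)) : MvPolynomial (Fin 2) ℂ) with hc
  set A := q (C a : MvPolynomial (Fin 2) ℂ) with hA
  set b := q (C (a - (d : ℂ)) : MvPolynomial (Fin 2) ℂ) with hb
  have hFE : F * E = 0 := by
    rw [hFdef, hE, ← map_mul]
    exact Ideal.Quotient.eq_zero_iff_mem.mpr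
      (Ideal.subset_span (by simp [SRIdeal, f, ha_def]))
  have hF : F = c * U + A * E := by
    rw [hFdef, hc, hA, hU, hE, ← map_mul, ← map_mul, ← map_add]
  have hbac : b = A + c := by
    rw [hb, hA, hc, ← map_add, ← C_add, sub_eq_add_neg]
  have hF2 : F * F = c * U * F := by
    linear_combination F * hF + A * hFE
  have powF : ∀ i : ℕ, F ^ (i + 1) = c ^ i * U ^ i * F := by
    intro i
    induction i with
    | zero => simp
    | succ i ih =>
      rw [pow_succ, ih]
      calc c ^ i * U ^ i * F * F = c ^ i * U ^ i * (F * F) := by ring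
        _ = c ^ (i + 1) * U ^ (i + 1) * F := by rw [hF2]; ring
  have hAUE : A * (U - E) = b * U - F := by
    linear_combination hF - U * hbac
  -- main identity
  have hsub : (b * U - F) ^ k =
      ∑ i ∈ Finset.range (k + 1), (-1) ^ (i + k) * (b * U) ^ i * F ^ (k - i) * (k.choose i : (MvPolynomial (Fin 2) ℂ) ⧸ SRIdeal m k d) := sub_pow _ _ _
  set P : (MvPolynomial (Fin 2) ℂ) ⧸ SRIdeal m k d :=
    ∑ i ∈ Finset.range k, (-1) ^ (i + k) * b ^ i * c ^ (k - i - 1) * (k.choose i : (MvPolynomial (Fin 2) ℂ) ⧸ SRIdeal m k d) with hP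
  have hmain : A ^ k * q ((X 0 - X 1) ^ k) = b ^ k * U ^ k + P * (F * U ^ (k - 1)) := by
    have h1 : A ^ k * q ((X 0 - X 1) ^ k) = (b * U - F) ^ k := by
      rw [map_pow, map_sub, ← hU, ← hE, ← mul_pow, hAUE]
    rw [h1, hsub, Finset.sum_range_succ]
    have hlast : (-1 : (MvPolynomial (Fin 2) ℂ) ⧸ SRIdeal m k d) ^ (k + k) * (b * U) ^ k * F ^ (k - k) * (k.choose k : (MvPolynomial (Fin 2) ℂ) ⧸ SRIdeal m k d) = b ^ k * U ^ k := by
      rw [show k + k = 2 * k by omega, pow_mul]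
      norm_num [mul_pow]
    rw [hlast]
    have hterm : ∀ i ∈ Finset.range k,
        (-1 : (MvPolynomial (Fin 2) ℂ) ⧸ SRIdeal m k d) ^ (i + k) * (b * U) ^ i * F ^ (k - i) * (k.choose i : (MvPolynomial (Fin 2) ℂ) ⧸ SRIdeal m k d)
        = ((-1) ^ (i + k) * b ^ i * c ^ (k - i - 1) * (k.choose i : (MvPolynomial (Fin 2) ℂ) ⧸ SRIdeal m k d)) * (F * U ^ (k - 1)) := by
      intro i hi
      rw [Finset.mem_range] at hi
      have e1 : k - i = (k - i - 1) + 1 := by omega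
      have e2 : i + (k - i - 1) = k - 1 := by omega
      rw [e1, powF, mul_pow]
      rw [show k - i - 1 + 1 - 1 = k - i - 1 by omega]
      have e3 : U ^ i * U ^ (k - i - 1) = U ^ (k - 1) := by rw [← pow_add, e2]
      linear_combination ((-1 : (MvPolynomial (Fin 2) ℂ) ⧸ SRIdeal m k d) ^ (i + k) * b ^ i * c ^ (k - i - 1) * (k.choose i : (MvPolynomial (Fin 2) ℂ) ⧸ SRIdeal m k d) * F) * e3
    rw [Finset.sum_congr rfl hterm, ← Finset.sum_mul, ← hP]
    ring
  -- inverses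
  have hAinv : q (C a⁻¹) * A = 1 := by
    rw [hA, ← map_mul, ← C_mul, inv_mul_cancel₀ ha, C_1, map_one]
  have hbinv : q (C (a - (d:ℂ))⁻¹) * b = 1 := by
    rw [hb, ← map_mul, ← C_mul, inv_mul_cancel₀ had, C_1, map_one]
  have hAinvk : q (C a⁻¹) ^ k * A ^ k = 1 := by
    rw [← mul_pow, hAinv, one_pow]
  have hbinvk : q (C (a - (d:ℂ))⁻¹) ^ k * b ^ k = 1 := by
    rw [← mul_pow, hbinv, one_pow]
  have hG1 : q (f * X 0 ^ (k - 1)) = F * U ^ (k - 1) := by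
    rw [map_mul, map_pow, ← hU]
  have hUk : q ((X 0 : MvPolynomial (Fin 2) ℂ) ^ k) = U ^ k := by rw [map_pow, ← hU]
  constructor
  · rw [Ideal.mem_span_pair]
    refine ⟨- (q (C (a - (d:ℂ))⁻¹) ^ k * P), q (C (a - (d:ℂ))⁻¹) ^ k * A ^ k, ?_⟩
    rw [hG1, hUk]
    linear_combination (q (C (a - (d:ℂ))⁻¹)) ^ k * hmain + U ^ k * hbinvk
  · have hUk1 : q ((X 0 : MvPolynomial (Fin 2) ℂ) ^ (k - 1)) = U ^ (k - 1) := by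
      rw [map_pow, ← hU]
    apply le_antisymm
    · rw [Ideal.span_le]
      rintro x (rfl | rfl)
      · exact Ideal.subset_span (Set.mem_insert _ _)
      · rw [SetLike.mem_coe, Ideal.mem_span_pair]
        refine ⟨q (C a⁻¹) ^ k * P * q (X 0 ^ (k - 1)), q (C a⁻¹) ^ k * b ^ k, ?_⟩
        rw [hUk, hUk1]
        linear_combination q ((X 0 - X 1) ^ k) * hAinvk - (q (C a⁻¹)) ^ k * hmain
    · rw [Ideal.span_le]
      rintro x (rfl | rfl)
      · exact Ideal.subset_span (Set.mem_insert _ _)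
      · rw [SetLike.mem_coe, Ideal.mem_span_pair]
        refine ⟨- (q (C (a - (d:ℂ))⁻¹) ^ k * P * q (X 0 ^ (k - 1))), q (C (a - (d:ℂ))⁻¹) ^ k * A ^ k, ?_⟩
        rw [hUk, hUk1]
        linear_combination (q (C (a - (d:ℂ))⁻¹)) ^ k * hmain + U ^ k * hbinvk
end

section
/- In the ring R = ℂ[u,e]/⟨e·u^{m-k}, u^m, (-d·u + (k-1)·e)·e⟩ with m > k ≥ 2 and d ≥ 1 integers, the kernel of multiplication by e on R is, as an ideal, equal to ⟨-d·u + (k-1)·e, u^{m-k}⟩, and as a ℂ-vector space it equals (-d·u + (k-1)·e)·R ⊕ ℂ·u^{m-k}. -/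
open MvPolynomial

/-!
On the line `e = c·u` with `c = d/(k-1)` the class `u_f = -d·u + (k-1)·e = (k-1)(e - c·u)`
vanishes, so restricting to that line identifies `ℂ[u,e]/⟨u_f⟩` with `ℂ[t]`, and it sends the
Stanley–Reisner ideal into `(t^(m-k+1))`. Hence `e·p ∈ I` forces `t^(m-k) ∣ p(t, c·t)`, i.e.
`p ∈ ⟨u_f, u^(m-k)⟩`, while `r·u_f - a·u^(m-k) ∈ I` forces `a = 0`. For the decomposition over `ℂ`:
in `R` we have `e·u^(m-k) = 0` and `u·u^(m-k) = -(1/d)·u_f·u^(m-k)`, so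
`R·u^(m-k) ⊆ u_f·R + ℂ·u^(m-k)`.
-/

section LineRestrict

variable {R : Type*} [CommRing R]

noncomputable def lineRestrict (c : R) : MvPolynomial (Fin 2) R →ₐ[R] Polynomial R :=
  aeval ![Polynomial.X, Polynomial.C c * Polynomial.X]

@[simp] lemma lineRestrict_C (c a : R) : lineRestrict c (C a) = Polynomial.C a :=
  aeval_C _ a

@[simp] lemma lineRestrict_X_zero (c : R) : lineRestrict c (X 0) = Polynomial.X := by
  simp [lineRestrict]

@[simp] lemma lineRestrict_X_one (c : R) :
    lineRestrict c (X 1) = Polynomial.C c * Polynomial.X := by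
  simp [lineRestrict]

lemma sub_aeval_lineRestrict_mem_span (c : R) (p : MvPolynomial (Fin 2) R) :
    p - Polynomial.aeval (X 0) (lineRestrict c p) ∈ Ideal.span {X 1 - C c * X 0} := by
  induction p using MvPolynomial.induction_on with
  | C a => simp [lineRestrict]
  | add p r hp hr => simpa only [map_add, add_sub_add_comm] using Ideal.add_mem _ hp hr
  | mul_X p n hp =>
    have hX : X n - Polynomial.aeval (X 0) (lineRestrict c (X n)) ∈
        Ideal.span {X 1 - C c * X 0} := by
      fin_cases n <;> simp
    have hsplit : p * X n - Polynomial.aeval (X 0) (lineRestrict c (p * X n)) =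
        (p - Polynomial.aeval (X 0) (lineRestrict c p)) * X n +
          Polynomial.aeval (X 0) (lineRestrict c p) *
            (X n - Polynomial.aeval (X 0) (lineRestrict c (X n))) := by
      simp only [map_mul]; ring
    rw [hsplit]
    exact Ideal.add_mem _ (Ideal.mul_mem_right _ _ hp) (Ideal.mul_mem_left _ _ hX)

end LineRestrict

lemma sub_C_constantCoeff_mem_span_range_X {σ R : Type*} [CommRing R] (p : MvPolynomial σ R) :
    p - C (constantCoeff p) ∈ Ideal.span (Set.range X) := by
  induction p using MvPolynomial.induction_on with
  | C a => simp
  | add p r hp hr => simpa only [map_add, add_sub_add_comm] using Ideal.add_mem _ hp hr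
  | mul_X p n hp =>
    simpa using Ideal.mul_mem_left _ p (Ideal.subset_span (Set.mem_range_self n))

namespace SRIdeal

noncomputable def uf (k d : ℕ) : MvPolynomial (Fin 2) ℂ :=
  C (-(d : ℂ)) * X 0 + C ((k : ℂ) - 1) * X 1

noncomputable def slope (k d : ℕ) : ℂ := d / ((k : ℂ) - 1)

variable {m k d : ℕ}

lemma X_one_mul_X_zero_pow_mem : X 1 * X 0 ^ (m - k) ∈ SRIdeal m k d :=
  Ideal.subset_span (by simp)

lemma uf_mul_X_one_mem : uf k d * X 1 ∈ SRIdeal m k d :=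
  Ideal.subset_span (by simp [uf])

lemma natCast_sub_one_ne_zero (hk : 2 ≤ k) : (k : ℂ) - 1 ≠ 0 :=
  sub_ne_zero.mpr (by exact_mod_cast (by omega : k ≠ 1))

lemma uf_eq_C_mul (hk : 2 ≤ k) : uf k d = C ((k : ℂ) - 1) * (X 1 - C (slope k d) * X 0) := by
  have hc : ((k : ℂ) - 1) * slope k d = d := mul_div_cancel₀ _ (natCast_sub_one_ne_zero hk)
  rw [uf, mul_sub, ← mul_assoc, ← C_mul, hc, map_neg]
  ring

lemma span_uf (hk : 2 ≤ k) :
    Ideal.span {uf k d} = Ideal.span {X 1 - C (slope k d) * X 0} := by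
  rw [uf_eq_C_mul hk, Ideal.span_singleton_mul_left_unit]
  exact (natCast_sub_one_ne_zero hk).isUnit.map C

lemma lineRestrict_uf (hk : 2 ≤ k) : lineRestrict (slope k d) (uf k d) = 0 := by
  simp [uf_eq_C_mul hk]

lemma X_pow_dvd_lineRestrict_of_mem (hk : 2 ≤ k) (hkm : k < m) {p : MvPolynomial (Fin 2) ℂ}
    (hp : p ∈ SRIdeal m k d) : Polynomial.X ^ (m - k + 1) ∣ lineRestrict (slope k d) p := by
  suffices SRIdeal m k d ≤
      (Ideal.span {Polynomial.X ^ (m - k + 1)}).comap (lineRestrict (slope k d)) from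
    Ideal.mem_span_singleton.mp (this hp)
  simp only [SRIdeal, Ideal.span_le, Set.insert_subset_iff, Set.singleton_subset_iff,
    SetLike.mem_coe, Ideal.mem_comap, Ideal.mem_span_singleton]
  refine ⟨?_, ?_, ?_⟩
  · rw [map_mul, map_pow, lineRestrict_X_one, lineRestrict_X_zero, pow_succ', mul_assoc]
    exact dvd_mul_left _ _
  · rw [map_pow, lineRestrict_X_zero]
    exact pow_dvd_pow _ (by omega)
  · change _ ∣ lineRestrict _ (uf k d * X 1)
    rw [map_mul, lineRestrict_uf hk, zero_mul]
    exact dvd_zero _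

lemma mem_span_of_X_one_mul_mem (hk : 2 ≤ k) (hkm : k < m) (hd : 1 ≤ d)
    {p : MvPolynomial (Fin 2) ℂ} (hp : X 1 * p ∈ SRIdeal m k d) :
    p ∈ Ideal.span {uf k d, X 0 ^ (m - k)} := by
  set c := slope k d
  have hc : IsUnit (Polynomial.C c) :=
    (div_ne_zero (by exact_mod_cast (by omega : d ≠ 0)) (natCast_sub_one_ne_zero hk)).isUnit.map _
  obtain ⟨g, hg⟩ : Polynomial.X ^ (m - k) ∣ lineRestrict c p := by
    have h := X_pow_dvd_lineRestrict_of_mem hk hkm hp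
    rwa [map_mul, lineRestrict_X_one, mul_comm (Polynomial.C c), mul_assoc, pow_succ',
      mul_dvd_mul_iff_left Polynomial.X_ne_zero, hc.dvd_mul_left] at h
  have hp_eq : p = (p - Polynomial.aeval (X 0) (lineRestrict c p)) +
      X 0 ^ (m - k) * Polynomial.aeval (X 0) g := by
    rw [hg, map_mul, map_pow, Polynomial.aeval_X]; ring
  rw [hp_eq]
  have h_uf : p - Polynomial.aeval (X 0) (lineRestrict c p) ∈ Ideal.span {uf k d} := by
    rw [span_uf hk]
    exact sub_aeval_lineRestrict_mem_span c p
  exact Ideal.add_mem _ (Ideal.span_mono (Set.singleton_subset_iff.mpr (Set.mem_insert _ _)) h_uf)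
    (Ideal.mul_mem_right _ _ (Ideal.subset_span (Set.mem_insert_of_mem _ rfl)))

lemma eq_zero_of_mul_uf_sub_mem (hk : 2 ≤ k) (hkm : k < m) {r : MvPolynomial (Fin 2) ℂ} {a : ℂ}
    (h : r * uf k d - C a * X 0 ^ (m - k) ∈ SRIdeal m k d) : a = 0 := by
  have h := Polynomial.X_pow_dvd_iff.mp (X_pow_dvd_lineRestrict_of_mem hk hkm h) (m - k) (by omega)
  simpa [lineRestrict_uf hk] using h

lemma X_mul_X_zero_pow_mem (hd : 1 ≤ d) (n : Fin 2) :
    X n * X 0 ^ (m - k) ∈ Ideal.span {uf k d} ⊔ SRIdeal m k d := by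
  fin_cases n
  · change X 0 * X 0 ^ (m - k) ∈ _
    have hd0 : (d : ℂ) ≠ 0 := by exact_mod_cast (by omega : d ≠ 0)
    have hC : C (-(d : ℂ)⁻¹) * C (-(d : ℂ)) = (1 : MvPolynomial (Fin 2) ℂ) := by
      rw [← C_mul, neg_mul_neg, inv_mul_cancel₀ hd0, C_1]
    have h : X 0 * X 0 ^ (m - k) = C (-(d : ℂ)⁻¹) *
        (uf k d * X 0 ^ (m - k) - C ((k : ℂ) - 1) * (X 1 * X 0 ^ (m - k))) := by
      rw [uf]
      linear_combination (-(X 0 * X 0 ^ (m - k))) * hC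
    rw [h]
    exact Ideal.mul_mem_left _ _ (Ideal.sub_mem _
      (Ideal.mem_sup_left (Ideal.mul_mem_right _ _ (Ideal.mem_span_singleton_self _)))
      (Ideal.mem_sup_right (Ideal.mul_mem_left _ _ X_one_mul_X_zero_pow_mem)))
  · exact Ideal.mem_sup_right X_one_mul_X_zero_pow_mem

lemma sub_C_constantCoeff_mul_X_zero_pow_mem (hd : 1 ≤ d) (p : MvPolynomial (Fin 2) ℂ) :
    (p - C (constantCoeff p)) * X 0 ^ (m - k) ∈ Ideal.span {uf k d} ⊔ SRIdeal m k d := by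
  have h : Ideal.span (Set.range X) ≤
      (Ideal.span {uf k d} ⊔ SRIdeal m k d).colon {X 0 ^ (m - k)} := by
    rw [Ideal.span_le, Set.range_subset_iff]
    exact fun n => Submodule.mem_colon_singleton.mpr (X_mul_X_zero_pow_mem hd n)
  exact Submodule.mem_colon_singleton.mp (h (sub_C_constantCoeff_mem_span_range_X p))

local notation "q" => Ideal.Quotient.mk (SRIdeal m k d)

lemma mem_span_mk_iff {s : Set (MvPolynomial (Fin 2) ℂ)} {p : MvPolynomial (Fin 2) ℂ} :
    q p ∈ Ideal.span (q '' s) ↔ p ∈ Ideal.span s ⊔ SRIdeal m k d := by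
  rw [← Ideal.map_span, Ideal.mem_quotient_iff_mem_sup]

lemma mk_X_one_mul_eq_zero_iff (hk : 2 ≤ k) (hkm : k < m) (hd : 1 ≤ d)
    (x : MvPolynomial (Fin 2) ℂ ⧸ SRIdeal m k d) :
    q (X 1) * x = 0 ↔ x ∈ Ideal.span {q (uf k d), q (X 0 ^ (m - k))} := by
  obtain ⟨p, rfl⟩ := Ideal.Quotient.mk_surjective x
  rw [← map_mul, Ideal.Quotient.eq_zero_iff_mem, ← Set.image_pair, mem_span_mk_iff]
  refine ⟨fun h => Ideal.mem_sup_left (mem_span_of_X_one_mul_mem hk hkm hd h), fun h => ?_⟩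
  have hle : Ideal.span {uf k d, X 0 ^ (m - k)} ⊔ SRIdeal m k d ≤ (SRIdeal m k d).colon {X 1} := by
    refine sup_le ?_ Ideal.le_colon
    rw [Ideal.span_le, Set.insert_subset_iff, Set.singleton_subset_iff]
    refine ⟨Submodule.mem_colon_singleton.mpr uf_mul_X_one_mem,
      Submodule.mem_colon_singleton.mpr ?_⟩
    rw [smul_eq_mul, mul_comm]
    exact X_one_mul_X_zero_pow_mem
  have hp := Submodule.mem_colon_singleton.mp (hle h)
  rwa [smul_eq_mul, mul_comm] at hp

lemma restrictScalars_span_pair_eq_sup (hd : 1 ≤ d) :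
    (Ideal.span {q (uf k d), q (X 0 ^ (m - k))}).restrictScalars ℂ =
      (Ideal.span {q (uf k d)}).restrictScalars ℂ ⊔ (ℂ ∙ q (X 0 ^ (m - k))) := by
  refine le_antisymm (fun x hx => ?_) (sup_le ?_ ?_)
  · obtain ⟨a, b, rfl⟩ := Ideal.mem_span_pair.mp hx
    obtain ⟨r, rfl⟩ := Ideal.Quotient.mk_surjective b
    have hsplit : q r * q (X 0 ^ (m - k)) = q ((r - C (constantCoeff r)) * X 0 ^ (m - k)) +
        constantCoeff r • q (X 0 ^ (m - k)) := by
      have h : r * X 0 ^ (m - k) = (r - C (constantCoeff r)) * X 0 ^ (m - k) +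
          constantCoeff r • X 0 ^ (m - k) := by
        rw [smul_eq_C_mul]; ring
      rw [← map_mul, h, map_add]
      rfl
    have hr : q ((r - C (constantCoeff r)) * X 0 ^ (m - k)) ∈ Ideal.span {q (uf k d)} := by
      rw [← Set.image_singleton, mem_span_mk_iff]
      exact sub_C_constantCoeff_mul_X_zero_pow_mem hd r
    rw [hsplit, ← add_assoc]
    exact add_mem (Submodule.mem_sup_left (Ideal.add_mem _
      (Ideal.mul_mem_left _ _ (Ideal.mem_span_singleton_self _)) hr))
      (Submodule.mem_sup_right (Submodule.smul_mem _ _ (Submodule.mem_span_singleton_self _)))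
  · exact Submodule.restrictScalars_mono ℂ
      (Ideal.span_mono (Set.singleton_subset_iff.mpr (Set.mem_insert _ _)))
  · rw [Submodule.span_le, Set.singleton_subset_iff]
    exact Ideal.subset_span (Set.mem_insert_of_mem _ rfl)

lemma disjoint_span_mk_uf (hk : 2 ≤ k) (hkm : k < m) :
    Disjoint ((Ideal.span {q (uf k d)}).restrictScalars ℂ) (ℂ ∙ q (X 0 ^ (m - k))) := by
  rw [Submodule.disjoint_def]
  rintro x hx hx'
  obtain ⟨b, rfl⟩ := Ideal.mem_span_singleton'.mp hx
  obtain ⟨a, ha⟩ := Submodule.mem_span_singleton.mp hx'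
  obtain ⟨r, rfl⟩ := Ideal.Quotient.mk_surjective b
  have h : r * uf k d - C a * X 0 ^ (m - k) ∈ SRIdeal m k d := by
    refine Ideal.Quotient.eq.mp ?_
    rw [map_mul, ← ha, ← smul_eq_C_mul]
    rfl
  rw [← ha, eq_zero_of_mul_uf_sub_mem hk hkm h, zero_smul]

end SRIdeal

/-- In `R = ℂ[u,e]/⟨e·u^(m-k), u^m, (-d·u + (k-1)·e)·e⟩` with `m > k ≥ 2` and `d ≥ 1`,
the kernel of multiplication by `e` is the ideal `⟨-d·u + (k-1)·e, u^(m-k)⟩`, and as a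
`ℂ`-vector space it is the (internal) direct sum of the ideal `(-d·u + (k-1)·e)·R` and the
line `ℂ·u^(m-k)`. -/
theorem stmt8 (m k d : ℕ) (hk : 2 ≤ k) (hkm : k < m) (hd : 1 ≤ d) :
    let q := Ideal.Quotient.mk (SRIdeal m k d)
    let f : MvPolynomial (Fin 2) ℂ := C (-(d : ℂ)) * X 0 + C ((k : ℂ) - 1) * X 1
    (∀ x, q (X 1) * x = 0 ↔ x ∈ Ideal.span {q f, q (X 0 ^ (m - k))}) ∧
    LinearMap.ker (LinearMap.mulLeft ℂ (q (X 1))) =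
      (Ideal.span {q f}).restrictScalars ℂ ⊔ (ℂ ∙ q (X 0 ^ (m - k))) ∧
    Disjoint ((Ideal.span {q f}).restrictScalars ℂ) (ℂ ∙ q (X 0 ^ (m - k))) := by
  intro q f
  have hker : LinearMap.ker (LinearMap.mulLeft ℂ (q (X 1))) =
      (Ideal.span {q f, q (X 0 ^ (m - k))}).restrictScalars ℂ := by
    ext x
    exact SRIdeal.mk_X_one_mul_eq_zero_iff hk hkm hd x
  exact ⟨SRIdeal.mk_X_one_mul_eq_zero_iff hk hkm hd,
    hker.trans (SRIdeal.restrictScalars_span_pair_eq_sup hd), SRIdeal.disjoint_span_mk_uf hk hkm⟩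
end
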